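/- arXiv:1704.03161 — 3 statements merged into one kernel-verified Lean document; each statement's English description precedes it below -/
import Mathlib

section
/- Let p be a prime, and let n, j be positive integers with j not divisible by p. Then p divides the binomial coefficient C((p−1)(pn − j) − 1, j), whenever (p−1)(pn−j)−1 ≥ 0. -/
theorem prime_dvd_A (p : ℕ) (hp : p.Prime) (n j : ℕ) (hn : 0 < n) (hj : 0 < j)
    (hpj : ¬ p ∣ j) (hle : j ≤ p * n) (hnn : 1 ≤ (p - 1) * (p * n - j)) :
    p ∣ ((p - 1) * (p * n - j) - 1).choose j := by
  haveI : Fact p.Prime := ⟨hp⟩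
  set N := (p - 1) * (p * n - j) - 1 with hN
  have hp1 : 1 ≤ p := hp.one_lt.le
  -- (N+1) ≡ j mod p
  have h1 : ((p - 1) * (p * n - j)) % p = j % p := by
    have : ((p:ℤ) - 1) * ((p:ℤ) * n - j) ≡ (j:ℤ) [ZMOD p] := by
      have : ((j:ℤ) - ((p:ℤ) - 1) * ((p:ℤ) * n - j)) = (p:ℤ) * (n + j - p * n) := by ring
      exact (Int.modEq_iff_dvd).2 ⟨_, this⟩
    have hcast : (((p - 1) * (p * n - j) : ℕ) : ℤ) = ((p:ℤ) - 1) * ((p:ℤ) * n - j) := by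
      rw [Nat.cast_mul, Nat.cast_sub hp1, Nat.cast_sub hle]
      push_cast
      ring
    have := this
    rw [← hcast] at this
    have := (Int.natCast_modEq_iff).1 (by exact_mod_cast this)
    exact this
  have hjp : 0 < j % p := Nat.pos_of_ne_zero (fun h => hpj (Nat.dvd_of_mod_eq_zero h))
  have hNp : N % p < j % p := by
    have hN1 : N + 1 = (p - 1) * (p * n - j) := by omega
    have hmod : (N + 1) % p = j % p := by rw [hN1]; exact h1
    have := Nat.mod_lt N (show 0 < p from hp.pos)
    have h2 : (N + 1) % p = (N % p + 1) % p := by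
      conv_lhs => rw [← Nat.mod_add_mod]
    by_cases hc : N % p + 1 = p
    · rw [h2, hc, Nat.mod_self] at hmod; omega
    · rw [h2, Nat.mod_eq_of_lt (by omega)] at hmod; omega
  have key : N.choose j ≡ (N % p).choose (j % p) * (N / p).choose (j / p) [MOD p] :=
    Choose.choose_modEq_choose_mod_mul_choose_div_nat
  rw [Nat.choose_eq_zero_of_lt hNp, zero_mul] at key
  exact (Nat.modEq_zero_iff_dvd).1 key
end

section
/- Let p be a prime and let s, n, j be positive integers with j not divisible by p^s. Then p divides the binomial coefficient C((p−1)(p^s·n − j) − 1, j), whenever (p−1)(p^s·n − j) − 1 ≥ 0. -/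
private lemma aux_dvd_A (p : ℕ) (hp : p.Prime) :
    ∀ s n j : ℕ, 0 < n → 0 < j → ¬ p ^ s ∣ j → j < p ^ s * n →
      p ∣ ((p - 1) * (p ^ s * n - j) - 1).choose j := by
  intro s
  induction s with
  | zero => intro n j _ _ hpj _; exact absurd (one_dvd j) (by simpa using hpj)
  | succ s ih =>
    intro n j hn hj hpj hlt
    haveI : Fact p.Prime := ⟨hp⟩
    have hp2 := hp.two_le
    set K := p ^ (s + 1) * n with hK
    have hd : 1 ≤ K - j := by omega
    have hM1 : 1 ≤ (p - 1) * (K - j) := Nat.mul_pos (by omega) (by omega)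
    set N := (p - 1) * (K - j) - 1 with hN
    by_cases hpdvd : p ∣ j
    · obtain ⟨j', rfl⟩ := hpdvd
      have hj' : 0 < j' := by
        rcases Nat.eq_zero_or_pos j' with h | h
        · simp [h] at hj
        · exact h
      have hps : ¬ p ^ s ∣ j' := fun h => hpj (by rw [pow_succ']; exact mul_dvd_mul_left p h)
      have hlt' : j' < p ^ s * n := by
        have h2 : p * j' < p * (p ^ s * n) := by rw [← mul_assoc, ← pow_succ']; exact hlt
        exact lt_of_mul_lt_mul_left h2 (Nat.zero_le p)
      have key := ih n j' hn hj' hps hlt'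
      set M := (p - 1) * (p ^ s * n - j') with hMdef
      have hMpos : 1 ≤ M := Nat.mul_pos (by omega) (by omega)
      have hKsplit : K - p * j' = p * (p ^ s * n - j') := by
        rw [hK, pow_succ', mul_assoc, ← Nat.mul_sub]
      have hNM : N = p * M - 1 := by
        rw [hN, hKsplit, hMdef, mul_left_comm]
      obtain ⟨M', hM'⟩ : ∃ M', M = M' + 1 := ⟨M - 1, by omega⟩
      have hNval : N = p * M' + (p - 1) := by
        rw [hNM, hM', Nat.mul_add, Nat.mul_one]; omega
      have hmod : N % p = p - 1 := by
        rw [hNval, Nat.mul_add_mod, Nat.mod_eq_of_lt (by omega)]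
      have hdiv : N / p = M' := by
        rw [hNval, Nat.mul_add_div (by omega), Nat.div_eq_of_lt (by omega)]; omega
      have lucas := Choose.choose_modEq_choose_mod_mul_choose_div_nat (p := p) (n := N) (k := p * j')
      rw [hmod, hdiv, Nat.mul_mod_right, Nat.mul_div_cancel_left _ (by omega : 0 < p),
        Nat.choose_zero_right, one_mul] at lucas
      have key' : p ∣ (N / p).choose ((p * j') / p) := by
        rw [hdiv, Nat.mul_div_cancel_left _ (by omega : 0 < p)]
        simpa [hM'] using key
      rw [hdiv, Nat.mul_div_cancel_left _ (by omega : 0 < p)] at key'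
      exact (Nat.modEq_zero_iff_dvd).1 (lucas.trans ((Nat.modEq_zero_iff_dvd).2 key'))
    · -- p does not divide j
      have hr : 0 < j % p := Nat.pos_of_ne_zero fun h => hpdvd (Nat.dvd_of_mod_eq_zero h)
      have hrp : j % p < p := Nat.mod_lt _ (by omega)
      -- N ≡ j - 1 [mod p] over the integers
      have hjK : j ≤ K := le_of_lt hlt
      have hcast : (N : ℤ) = ((p : ℤ) - 1) * ((K : ℤ) - j) - 1 := by
        rw [hN]
        push_cast [Nat.cast_sub hM1, Nat.cast_sub hjK, Nat.cast_sub (by omega : 1 ≤ p)]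
        ring
      have hmodZ : (N : ℤ) % p = ((j : ℤ) - 1) % p := by
        apply Int.ModEq.eq
        rw [Int.modEq_iff_dvd]
        refine ⟨(p : ℤ) ^ s * n - ((K : ℤ) - j), ?_⟩
        rw [hcast]
        have : (K : ℤ) = (p : ℤ) ^ (s + 1) * n := by rw [hK]; push_cast; ring
        rw [this]; ring
      have hmodN : N % p = (j - 1) % p := by
        have h1 : ((N % p : ℕ) : ℤ) = (((j - 1) % p : ℕ) : ℤ) := by
          push_cast [Nat.cast_sub hj]
          exact hmodZ
        exact_mod_cast h1
      have hj1 : (j - 1) % p = j % p - 1 := by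
        have hdm := Nat.div_add_mod j p
        have : j - 1 = p * (j / p) + (j % p - 1) := by omega
        rw [this, Nat.mul_add_mod, Nat.mod_eq_of_lt (by omega)]
      have hzero : (N % p).choose (j % p) = 0 :=
        Nat.choose_eq_zero_of_lt (by omega)
      have lucas := Choose.choose_modEq_choose_mod_mul_choose_div_nat (p := p) (n := N) (k := j)
      rw [hzero, zero_mul] at lucas
      exact (Nat.modEq_zero_iff_dvd).1 lucas

theorem prime_dvd_A_pow (p : ℕ) (hp : p.Prime) (s n j : ℕ) (hs : 0 < s) (hn : 0 < n)
    (hj : 0 < j) (hpj : ¬ p ^ s ∣ j) (hle : j ≤ p ^ s * n)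
    (hnn : 1 ≤ (p - 1) * (p ^ s * n - j)) :
    p ∣ ((p - 1) * (p ^ s * n - j) - 1).choose j := by
  have hlt : j < p ^ s * n := by
    rcases lt_or_eq_of_le hle with h | h
    · exact h
    · exact absurd (h ▸ Dvd.intro n rfl) hpj
  exact aux_dvd_A p hp s n j hn hj hpj hlt
end

section
/- Let p be an odd prime and s, n, j nonnegative integers. Then (−1)^{p^s j} · C((p−1)(p^s n − p^s j) − 1, p^s j) ≡ (−1)^j · C((p−1)(n − j) − 1, j) modulo p, i.e. (−1)^{p^s j}·A(p^s n, p^s j) ≡ (−1)^j·A(n, j) (mod p), assuming the relevant binomial arguments are nonnegative. -/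
/-- one-step: C(p*m - 1, p*t) ≡ C(m-1, t) mod p, for m ≥ 1 -/
lemma step_lemma (p : ℕ) (hp : p.Prime) (m t : ℕ) (hm : 1 ≤ m) :
    ((Nat.choose (p * m - 1) (p * t) : ℕ) : ZMod p) = ((Nat.choose (m - 1) t : ℕ) : ZMod p) := by
  haveI : Fact p.Prime := ⟨hp⟩
  have hp1 : 1 ≤ p := hp.one_lt.le
  have h := (Choose.choose_modEq_choose_mod_mul_choose_div (n := p * m - 1) (k := p * t) (p := p))
  have key : p * m - 1 = p * (m - 1) + (p - 1) := by
    have h' : p * m = p * (m - 1) + p := by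
      rw [← Nat.mul_succ]; congr 1; omega
    omega
  have hmod : (p * m - 1) % p = p - 1 := by
    rw [key, Nat.mul_add_mod]
    exact Nat.mod_eq_of_lt (by omega)
  have hdiv : (p * m - 1) / p = m - 1 := by
    rw [key, Nat.mul_add_div (by omega), Nat.div_eq_of_lt (by omega), add_zero]
  have hkm : (p * t) % p = 0 := Nat.mul_mod_right p t
  have hkd : (p * t) / p = t := Nat.mul_div_cancel_left t (by omega)
  rw [hmod, hdiv, hkm, hkd, Nat.choose_zero_right] at h
  have h2 := (ZMod.intCast_eq_intCast_iff _ _ _).mpr h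
  push_cast at h2 ⊢
  simpa using h2

lemma pow_lemma (p : ℕ) (hp : p.Prime) (s m t : ℕ) (hm : 1 ≤ m) :
    ((Nat.choose (p ^ s * m - 1) (p ^ s * t) : ℕ) : ZMod p) = ((Nat.choose (m - 1) t : ℕ) : ZMod p) := by
  induction s generalizing m t with
  | zero => simp
  | succ s ih =>
    have h1 : p ^ (s+1) * m = p ^ s * (p * m) := by ring
    have h2 : p ^ (s+1) * t = p ^ s * (p * t) := by ring
    rw [h1, h2, ih (p * m) (p * t) (by nlinarith [hp.one_lt]),
      show p * m - 1 = p * m - 1 from rfl]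
    exact step_lemma p hp m t hm

theorem A_pow_congr (p : ℕ) (hp : p.Prime) (hodd : Odd p) (s n j : ℕ)
    (hle : j ≤ n) (hnn : 1 ≤ (p - 1) * (n - j))
    (hnn' : 1 ≤ (p - 1) * (p ^ s * n - p ^ s * j)) :
    (-1 : ZMod p) ^ (p ^ s * j) *
        ((Nat.choose ((p - 1) * (p ^ s * n - p ^ s * j) - 1) (p ^ s * j) : ℕ) : ZMod p) =
      (-1 : ZMod p) ^ j * ((Nat.choose ((p - 1) * (n - j) - 1) j : ℕ) : ZMod p) := by
  have hsign : (-1 : ZMod p) ^ (p ^ s * j) = (-1 : ZMod p) ^ j := by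
    rw [pow_mul, (hodd.pow (n := s)).neg_one_pow]
  have harg : p ^ s * n - p ^ s * j = p ^ s * (n - j) := (Nat.mul_sub _ _ _).symm
  have harg2 : (p - 1) * (p ^ s * (n - j)) = p ^ s * ((p - 1) * (n - j)) := by ring
  rw [hsign, harg, harg2, pow_lemma p hp s ((p-1)*(n-j)) j hnn]
end
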